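/- For c ≥ 1, δ ∈ [0,1), and ℓ ≥ 1, the quantity h(c) := c − 2ℓ ∫_0^1 (sin(πc(1−δ)v)/(πv))(1−v)^{ℓ²} dv satisfies h(c) ≤ c − 2ℓ[ (2c(1−δ)/(π(ℓ²+1)))(√2 − (2√2−2)e^{−(ℓ²+1)/(4c)} − (2−√2)e^{−(ℓ²+1)/(2c)}) − (1/π)∫_{ℓ²/c}^∞ e^{−u}/u du ]. -/

import Mathlib

/-!
Split `[0, 1]` at `1/(4c)`, `1/(2c)` and `1/c`. On the first three pieces the argument of the
sine stays below `π/4`, `π/2` and `π`, so concavity of `sin` bounds `sin x / x` from below by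
`2√2/π`, `2/π` and `0`; against the weight `(1 - v)^(ℓ²)` these constants integrate exactly, and
`(1 - T)^(ℓ²+1) ≤ exp (-(ℓ²+1) T)`. On `[1/c, 1]` only `sin ≥ -1` and `(1 - v)^(ℓ²) ≤ exp (-ℓ² v)`
are used, and the substitution `u = ℓ² v` turns `∫ exp (-ℓ² v) / v` into the exponential integral.
-/

open Real MeasureTheory Set intervalIntegral

/-- At `v = 0` this is `0` rather than the continuous extension `b / π`; integrals do not see
the difference. -/
noncomputable def dampedSinc (b L v : ℝ) : ℝ := sin (b * v) / (π * v) * (1 - v) ^ L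

lemma sin_div_mul_le_sin {x θ : ℝ} (hx : 0 ≤ x) (hxθ : x ≤ θ) (hθ : θ ≤ π) :
    sin θ / θ * x ≤ sin x := by
  rcases hx.eq_or_lt with rfl | hx
  · simp
  have hθ0 : 0 < θ := hx.trans_le hxθ
  have hchord := strictConcaveOn_sin_Icc.concaveOn.2 (⟨le_rfl, pi_pos.le⟩ : (0:ℝ) ∈ Icc 0 π)
    ⟨hθ0.le, hθ⟩ (sub_nonneg.2 ((div_le_one hθ0).2 hxθ)) (div_nonneg hx.le hθ0.le)
    (sub_add_cancel 1 (x / θ))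
  rw [div_mul_comm]
  simpa [div_mul_cancel₀ _ hθ0.ne'] using hchord

lemma intervalIntegrable_dampedSinc (b : ℝ) {L : ℝ} (hL : 0 ≤ L) (s t : ℝ) :
    IntervalIntegrable (dampedSinc b L) volume s t := by
  have hcont : Continuous fun v => b / π * sinc (b * v) * (1 - v) ^ L := by
    fun_prop (disch := exact fun _ => Or.inr hL)
  refine (hcont.intervalIntegrable s t).congr_ae (ae_restrict_of_ae ?_)
  filter_upwards [Measure.ae_ne volume 0] with v hv
  rcases eq_or_ne b 0 with rfl | hb
  · simp [dampedSinc]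
  rw [dampedSinc, sinc_of_ne_zero (mul_ne_zero hb hv)]
  field_simp

lemma integral_one_sub_rpow {L : ℝ} (hL : -1 < L) (s t : ℝ) :
    ∫ v in s..t, (1 - v) ^ L = ((1 - s) ^ (L + 1) - (1 - t) ^ (L + 1)) / (L + 1) := by
  simp [intervalIntegral.integral_comp_sub_left (fun u => u ^ L), integral_rpow (Or.inl hL)]

lemma one_sub_rpow_le_exp_neg_mul {T k : ℝ} (hT : T ≤ 1) (hk : 0 ≤ k) :
    (1 - T) ^ k ≤ exp (-(k * T)) := by
  calc (1 - T) ^ k ≤ exp (-T) ^ k := rpow_le_rpow (sub_nonneg.2 hT) (one_sub_le_exp_neg T) hk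
    _ = exp (-(k * T)) := by rw [← exp_mul]; ring_nf

lemma sin_div_mul_le_integral_dampedSinc {b L s t θ : ℝ} (hb : 0 ≤ b) (hL : 0 ≤ L)
    (hs : 0 ≤ s) (hst : s ≤ t) (ht : t ≤ 1) (hbt : b * t ≤ θ) (hθ : θ ≤ π) :
    sin θ / θ * b / π * (((1 - s) ^ (L + 1) - (1 - t) ^ (L + 1)) / (L + 1))
      ≤ ∫ v in s..t, dampedSinc b L v := by
  rw [← integral_one_sub_rpow (by linarith) s t, ← intervalIntegral.integral_const_mul]
  refine integral_mono_on_of_le_Ioo hst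
    ((by fun_prop (disch := exact fun _ => Or.inr hL) : Continuous _).intervalIntegrable s t)
    (intervalIntegrable_dampedSinc b hL s t) fun v hv => ?_
  have hv0 : 0 < v := hs.trans_lt hv.1
  have hbv : b * v ≤ θ := (mul_le_mul_of_nonneg_left hv.2.le hb).trans hbt
  have hsin := sin_div_mul_le_sin (mul_nonneg hb hv0.le) hbv hθ
  have h1v : 0 ≤ 1 - v := by linarith [hv.2]
  refine mul_le_mul_of_nonneg_right ?_ (rpow_nonneg h1v L)
  rw [le_div_iff₀ (by positivity)]
  calc sin θ / θ * b / π * (π * v) = sin θ / θ * (b * v) := by field_simp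
    _ ≤ sin (b * v) := hsin

lemma integrableOn_exp_neg_mul_div_Ioi {L s : ℝ} (hL : 0 < L) (hs : 0 < s) :
    IntegrableOn (fun v => exp (-(L * v)) / v) (Ioi s) := by
  refine ((exp_neg_integrableOn_Ioi s hL).div_const s).mono'
    (by fun_prop : Measurable _).aestronglyMeasurable ?_
  refine (ae_restrict_iff' measurableSet_Ioi).2 (ae_of_all _ fun v (hv : s < v) => ?_)
  have hv0 : 0 < v := hs.trans hv
  rw [norm_of_nonneg (by positivity), neg_mul]
  exact div_le_div_of_nonneg_left (exp_pos _).le hs hv.le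

lemma integral_exp_neg_mul_div_Ioi {L : ℝ} (hL : 0 < L) (s : ℝ) :
    ∫ v in Ioi s, exp (-(L * v)) / v = ∫ u in Ioi (L * s), exp (-u) / u := by
  rw [← integral_comp_mul_left_Ioi' (fun u => exp (-u) / u) s hL, smul_eq_mul,
    ← MeasureTheory.integral_const_mul]
  congr 1 with v
  rw [← mul_div_assoc, mul_div_mul_left _ _ hL.ne']

lemma neg_integral_exp_neg_div_le_integral_dampedSinc (b : ℝ) {L s : ℝ} (hL : 0 < L)
    (hs : 0 < s) (hs1 : s ≤ 1) :
    -(1 / π) * ∫ u in Ioi (L * s), exp (-u) / u ≤ ∫ v in s..1, dampedSinc b L v := by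
  have hint := integrableOn_exp_neg_mul_div_Ioi hL hs
  have hpt : ∀ v ∈ Icc s 1, -(1 / π) * (exp (-(L * v)) / v) ≤ dampedSinc b L v := by
    intro v ⟨hsv, hv1⟩
    have hv0 : 0 < v := hs.trans_le hsv
    have hpow : 0 ≤ (1 - v) ^ L := rpow_nonneg (by linarith) L
    calc -(1 / π) * (exp (-(L * v)) / v) = -1 / (π * v) * exp (-(L * v)) := by ring
      _ ≤ -1 / (π * v) * (1 - v) ^ L :=
        mul_le_mul_of_nonpos_left (one_sub_rpow_le_exp_neg_mul hv1 hL.le)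
          (div_nonpos_of_nonpos_of_nonneg (by norm_num) (by positivity))
      _ ≤ sin (b * v) / (π * v) * (1 - v) ^ L := by
        gcongr
        exact neg_one_le_sin _
  calc -(1 / π) * ∫ u in Ioi (L * s), exp (-u) / u
      = -(1 / π) * ∫ v in Ioi s, exp (-(L * v)) / v := by rw [integral_exp_neg_mul_div_Ioi hL]
    _ ≤ -(1 / π) * ∫ v in s..1, exp (-(L * v)) / v := by
      refine mul_le_mul_of_nonpos_left ?_ (by simp [pi_pos.le])
      rw [integral_of_le hs1]
      refine setIntegral_mono_set hint ?_ Ioc_subset_Ioi_self.eventuallyLE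
      exact (ae_restrict_iff' measurableSet_Ioi).2
        (ae_of_all _ fun v (hv : s < v) => by have hv0 := hs.trans hv; positivity)
    _ = ∫ v in s..1, -(1 / π) * (exp (-(L * v)) / v) :=
      (intervalIntegral.integral_const_mul _ _).symm
    _ ≤ ∫ v in s..1, dampedSinc b L v :=
      integral_mono_on hs1 (((intervalIntegrable_iff_integrableOn_Ioc_of_le hs1).2
        (hint.mono_set Ioc_subset_Ioi_self)).const_mul _)
        (intervalIntegrable_dampedSinc b hL.le s 1) hpt

lemma integral_dampedSinc_eq_add (b : ℝ) {L : ℝ} (hL : 0 ≤ L) (t₁ t₂ t₃ : ℝ) :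
    ∫ v in (0 : ℝ)..1, dampedSinc b L v =
      (∫ v in (0 : ℝ)..t₁, dampedSinc b L v) + (∫ v in t₁..t₂, dampedSinc b L v)
        + (∫ v in t₂..t₃, dampedSinc b L v) + ∫ v in t₃..1, dampedSinc b L v := by
  have h := intervalIntegrable_dampedSinc b hL
  rw [integral_add_adjacent_intervals (h 0 t₁) (h t₁ t₂),
    integral_add_adjacent_intervals (h 0 t₂) (h t₂ t₃),
    integral_add_adjacent_intervals (h 0 t₃) (h t₃ 1)]

lemma le_integral_dampedSinc {b L T : ℝ} (hb : 0 ≤ b) (hL : 0 < L) (hT : 0 < T) (hT1 : T ≤ 1)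
    (hbT : b * T ≤ π) :
    2 * b / (π ^ 2 * (L + 1)) *
        (√2 - (2 * √2 - 2) * exp (-((L + 1) * (T / 4)))
          - (2 - √2) * exp (-((L + 1) * (T / 2))))
      - 1 / π * ∫ u in Ioi (L * T), exp (-u) / u
      ≤ ∫ v in (0 : ℝ)..1, dampedSinc b L v := by
  rw [integral_dampedSinc_eq_add _ hL.le (T / 4) (T / 2) T]
  have h₁ := sin_div_mul_le_integral_dampedSinc (t := T / 4) (θ := π / 4) hb hL.le le_rfl
    (by positivity) (by linarith) (by linarith) (by linarith [pi_pos])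
  have h₂ := sin_div_mul_le_integral_dampedSinc (s := T / 4) (t := T / 2) (θ := π / 2) hb hL.le
    (by positivity) (by linarith) (by linarith) (by linarith) (by linarith [pi_pos])
  have h₃ := sin_div_mul_le_integral_dampedSinc (s := T / 2) hb hL.le (by positivity)
    (by linarith) hT1 hbT le_rfl
  have h₄ := neg_integral_exp_neg_div_le_integral_dampedSinc b hL hT hT1
  have hk : 0 ≤ L + 1 := by positivity
  have hE₁ := one_sub_rpow_le_exp_neg_mul (T := T / 4) (by linarith) hk
  have hE₂ := one_sub_rpow_le_exp_neg_mul (T := T / 2) (by linarith) hk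
  have hA : (1 - T / 2) ^ (L + 1) ≤ (1 - T / 4) ^ (L + 1) :=
    rpow_le_rpow (by linarith) (by linarith) hk
  rw [sin_pi_div_four, sub_zero, one_rpow] at h₁
  rw [sin_pi_div_two] at h₂
  rw [sin_pi] at h₃
  have hP : 0 ≤ b / (π ^ 2 * (L + 1)) := by positivity
  have hs₁ : 0 ≤ √2 - 1 := by linarith [one_lt_sqrt_two]
  have hs₂ : 0 ≤ 2 - √2 := by linarith [sqrt_two_lt_three_halves]
  have hπ := pi_pos.ne'
  -- The last term pays for weakening Jordan's constant `2 / π` on `[T / 4, T / 2]` to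
  -- `(4 - 2√2) / π`.
  linear_combination (norm := skip) h₁ + h₂ + h₃ + h₄
    + 4 * mul_nonneg (mul_nonneg hP hs₁) (sub_nonneg.2 hE₁)
    + 2 * mul_nonneg (mul_nonneg hP hs₂) (sub_nonneg.2 hE₂)
    + 2 * mul_nonneg (mul_nonneg hP hs₁) (sub_nonneg.2 hA)
  field_simp
  ring_nf
  rfl

theorem h_upper_bound (c δ ℓ : ℝ) (hc : 1 ≤ c) (hδ0 : 0 ≤ δ) (hδ1 : δ < 1)
    (hℓ : 1 ≤ ℓ) :
    c - 2 * ℓ * ∫ v in (0 : ℝ)..1,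
        Real.sin (Real.pi * c * (1 - δ) * v) / (Real.pi * v) * (1 - v) ^ (ℓ ^ 2)
      ≤ c - 2 * ℓ *
          (2 * c * (1 - δ) / (Real.pi * (ℓ ^ 2 + 1)) *
              (Real.sqrt 2 - (2 * Real.sqrt 2 - 2) * Real.exp (-(ℓ ^ 2 + 1) / (4 * c))
                - (2 - Real.sqrt 2) * Real.exp (-(ℓ ^ 2 + 1) / (2 * c)))
            - 1 / Real.pi * ∫ u in Set.Ioi (ℓ ^ 2 / c), Real.exp (-u) / u) := by
  have hc0 : 0 < c := by linarith
  have hbT : π * c * (1 - δ) * c⁻¹ ≤ π := by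
    rw [mul_right_comm, mul_inv_cancel_right₀ hc0.ne']
    exact mul_le_of_le_one_right pi_pos.le (by linarith)
  have key := le_integral_dampedSinc (mul_nonneg (by positivity) (by linarith))
    (by positivity : 0 < ℓ ^ 2) (inv_pos.2 hc0) (inv_le_one_of_one_le₀ hc) hbT
  refine sub_le_sub_left (mul_le_mul_of_nonneg_left (le_of_eq_of_le ?_ key) (by positivity)) c
  have hπ := pi_pos.ne'
  field_simp
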